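/- The closure-by-regions widening does not commute with the time-elapse operator for event clocks: there exist a finite set of regions R (the Alur–Dill regions Reg over clocks of a one-letter alphabet with cmax = 1) and an event-zone Z such that Future(Closure_R(Z)) is not contained in Closure_R(Future(Z)). -/

import Mathlib

/-- Event clocks over alphabet `α`: a history clock and a prophecy clock per letter. -/
inductive Clock (α : Type) where
  | hist (a : α)
  | proph (a : α)
deriving DecidableEq

/-- A valuation assigns to each event clock a real value or `⊥` (here `none`). -/
def Val (α : Type) := Clock α → Option ℝ

/-- All defined clock values are nonnegative. -/
def Nonneg {α : Type} (v : Val α) : Prop := ∀ x r, v x = some r → 0 ≤ r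

/-- `v[x := d]`. -/
def Val.set {α : Type} [DecidableEq α] (v : Val α) (x : Clock α) (d : Option ℝ) : Val α :=
  fun y => if y = x then d else v y

/-- Time elapse: history clocks increase, prophecy clocks decrease; `⊥` unaffected. -/
def elapse {α : Type} (v : Val α) (t : ℝ) : Val α := fun c =>
  match c with
  | .hist a => (v (.hist a)).map (· + t)
  | .proph a => (v (.proph a)).map (· - t)

/-- Time elapse by `t` is allowed: `t ≥ 0` and all prophecy clocks are at least `t`. -/
def CanElapse {α : Type} (v : Val α) (t : ℝ) : Prop :=
  0 ≤ t ∧ ∀ a r, v (.proph a) = some r → t ≤ r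

def InitialVal {α : Type} (v : Val α) : Prop := ∀ a, v (.hist a) = none

def FinalVal {α : Type} (v : Val α) : Prop := ∀ a, v (.proph a) = none

/-- Clock constraints: Boolean combinations of atomic constraints `x ∼ c`. -/
inductive Constr (α : Type) where
  | tt
  | lt (x : Clock α) (c : ℕ)
  | gt (x : Clock α) (c : ℕ)
  | eq (x : Clock α) (c : ℕ)
  | not (ψ : Constr α)
  | and (ψ₁ ψ₂ : Constr α)

def Constr.sat {α : Type} (v : Val α) : Constr α → Prop
  | .tt => True
  | .lt x c => ∃ r, v x = some r ∧ r < (c : ℝ)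
  | .gt x c => ∃ r, v x = some r ∧ (c : ℝ) < r
  | .eq x c => v x = some (c : ℝ)
  | .not ψ => ¬ Constr.sat v ψ
  | .and ψ₁ ψ₂ => Constr.sat v ψ₁ ∧ Constr.sat v ψ₂

/-- An event-clock automaton. -/
structure ECTA (α Q : Type) where
  init : Q
  edges : Set (Q × α × Constr α × Q)
  accept : Set Q

/-- Discrete step on letter `σ`: there is a nonnegative valuation `v̄` with
`v̄[→σ := 0] = v`, `v̄[←σ := 0] = v'` and `v̄ ⊨ ψ` for some edge `(q,σ,ψ,q')`. -/
def DStep {α Q : Type} [DecidableEq α] (A : ECTA α Q) (q : Q) (v : Val α) (σ : α)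
    (q' : Q) (v' : Val α) : Prop :=
  ∃ ψ, (q, σ, ψ, q') ∈ A.edges ∧
    ∃ vb : Val α, Nonneg vb ∧
      vb.set (.proph σ) (some 0) = v ∧
      vb.set (.hist σ) (some 0) = v' ∧
      Constr.sat vb ψ

/-- Combined step: elapse `t`, then fire a `σ`-edge. -/
def TStep {α Q : Type} [DecidableEq α] (A : ECTA α Q) (q : Q) (v : Val α) (t : ℝ) (σ : α)
    (q' : Q) (v' : Val α) : Prop :=
  CanElapse v t ∧ DStep A q (elapse v t) σ q' v'

/-- Acceptance of a timed word (given by successive delays) from state `(q,v)`. -/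
inductive ECAcc {α Q : Type} [DecidableEq α] (A : ECTA α Q) : Q → Val α → List (ℝ × α) → Prop where
  | nil : ∀ q v, q ∈ A.accept → FinalVal v → ECAcc A q v []
  | cons : ∀ q v t σ q' v' w, TStep A q v t σ q' v' → ECAcc A q' v' w → ECAcc A q v ((t, σ) :: w)

/-- `Untime(L(A,(q,v)))`. -/
def UntimedLangFrom {α Q : Type} [DecidableEq α] (A : ECTA α Q) (q : Q) (v : Val α) :
    Set (List α) :=
  { w | ∃ θ : List (ℝ × α), ECAcc A q v θ ∧ θ.map Prod.snd = w }

/-- The timed language of `A` (initialized runs). -/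
def TLang {α Q : Type} [DecidableEq α] (A : ECTA α Q) : Set (List (ℝ × α)) :=
  { θ | ∃ v, Nonneg v ∧ InitialVal v ∧ ECAcc A A.init v θ }

/-- `Untime(L(A))`. -/
def UntimedLang {α Q : Type} [DecidableEq α] (A : ECTA α Q) : Set (List α) :=
  { w | ∃ v, Nonneg v ∧ InitialVal v ∧ w ∈ UntimedLangFrom A A.init v }
/-- Distance to the relevant integer boundary: `⌈r⌉ − r` for history clocks,
`r − ⌊r⌋` for prophecy clocks. -/
noncomputable def fracDist {α : Type} : Clock α → ℝ → ℝ
  | .hist _, r => (⌈r⌉ : ℝ) - r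
  | .proph _, r => r - (⌊r⌋ : ℝ)

/-- Signed value used for diagonal constraints: prophecy clocks are negated. -/
def sval {α : Type} : Clock α → ℝ → ℝ
  | .hist _, r => r
  | .proph _, r => -r

/-- The Alur–Dill region equivalence with maximal constant `cmax`. -/
def RegEq {α : Type} (cmax : ℕ) (v₁ v₂ : Val α) : Prop :=
  (∀ x, v₁ x = none ↔ v₂ x = none) ∧
  (∀ x r₁ r₂, v₁ x = some r₁ → v₂ x = some r₂ →
      (((cmax : ℝ) < r₁ ∧ (cmax : ℝ) < r₂) ∨ (⌈r₁⌉ = ⌈r₂⌉ ∧ ⌊r₁⌋ = ⌊r₂⌋))) ∧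
  (∀ x y rx₁ ry₁ rx₂ ry₂, v₁ x = some rx₁ → v₁ y = some ry₁ →
      v₂ x = some rx₂ → v₂ y = some ry₂ → rx₁ ≤ (cmax : ℝ) → ry₁ ≤ (cmax : ℝ) →
      (fracDist x rx₁ ≤ fracDist y ry₁ ↔ fracDist x rx₂ ≤ fracDist y ry₂))

/-- The refined (Bouyer-style) region equivalence. -/
def RegEqD {α : Type} (cmax : ℕ) (v₁ v₂ : Val α) : Prop :=
  RegEq cmax v₁ v₂ ∧
  (∀ x y rx₁ ry₁ rx₂ ry₂, v₁ x = some rx₁ → v₁ y = some ry₁ →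
      v₂ x = some rx₂ → v₂ y = some ry₂ →
      ((cmax : ℝ) < rx₁ ∨ (cmax : ℝ) < ry₁) →
      ((2 * (cmax : ℝ) < |sval x rx₁ - sval y ry₁| ∧ 2 * (cmax : ℝ) < |sval x rx₂ - sval y ry₂|) ∨
       (⌊sval x rx₁ - sval y ry₁⌋ = ⌊sval x rx₂ - sval y ry₂⌋ ∧
        ⌈sval x rx₁ - sval y ry₁⌉ = ⌈sval x rx₂ - sval y ry₂⌉)))

/-- A region of an equivalence `E`: an equivalence class of nonnegative valuations. -/
def IsRegionOf {α : Type} (E : Val α → Val α → Prop) (r : Set (Val α)) : Prop :=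
  ∃ v, Nonneg v ∧ r = { v' | Nonneg v' ∧ E v v' }

def InitialRegion {α : Type} (r : Set (Val α)) : Prop := ∀ v ∈ r, InitialVal v
def FinalRegion {α : Type} (r : Set (Val α)) : Prop := ∀ v ∈ r, FinalVal v

/-- Acceptance in the universal region automaton `RA(∀,E,A)`. -/
inductive UAcc {α Q : Type} [DecidableEq α] (A : ECTA α Q) (E : Val α → Val α → Prop) :
    Q → Set (Val α) → List α → Prop where
  | nil : ∀ q r, q ∈ A.accept → IsRegionOf E r → FinalRegion r → UAcc A E q r []
  | cons : ∀ q r σ q' r' w, IsRegionOf E r → IsRegionOf E r' →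
      (∀ v ∈ r, ∃ t v', v' ∈ r' ∧ TStep A q v t σ q' v') →
      UAcc A E q' r' w → UAcc A E q r (σ :: w)

/-- Acceptance in the existential region automaton `RA(∃,E,A)`. -/
inductive EAcc {α Q : Type} [DecidableEq α] (A : ECTA α Q) (E : Val α → Val α → Prop) :
    Q → Set (Val α) → List α → Prop where
  | nil : ∀ q r, q ∈ A.accept → IsRegionOf E r → FinalRegion r → EAcc A E q r []
  | cons : ∀ q r σ q' r' w, IsRegionOf E r → IsRegionOf E r' →
      (∃ v ∈ r, ∃ t v', v' ∈ r' ∧ TStep A q v t σ q' v') →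
      EAcc A E q' r' w → EAcc A E q r (σ :: w)

/-- The language of the universal region automaton. -/
def ULang {α Q : Type} [DecidableEq α] (A : ECTA α Q) (E : Val α → Val α → Prop) :
    Set (List α) :=
  { w | ∃ r, IsRegionOf E r ∧ InitialRegion r ∧ UAcc A E A.init r w }

/-- The language of the existential region automaton. -/
def ELang {α Q : Type} [DecidableEq α] (A : ECTA α Q) (E : Val α → Val α → Prop) :
    Set (List α) :=
  { w | ∃ r, IsRegionOf E r ∧ InitialRegion r ∧ EAcc A E A.init r w }

/-- All constants in a constraint are at most `k`. -/
def Constr.BoundedBy {α : Type} (k : ℕ) : Constr α → Prop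
  | .tt => True
  | .lt _ c => c ≤ k
  | .gt _ c => c ≤ k
  | .eq _ c => c ≤ k
  | .not ψ => Constr.BoundedBy k ψ
  | .and ψ₁ ψ₂ => Constr.BoundedBy k ψ₁ ∧ Constr.BoundedBy k ψ₂

/-- `cmax` bounds all constants appearing in the guards of `A`. -/
def MaxConstLe {α Q : Type} (A : ECTA α Q) (k : ℕ) : Prop :=
  ∀ e ∈ A.edges, Constr.BoundedBy k e.2.2.1
/-- Whether a clock is a prophecy clock. -/
def Clock.isProph {α : Type} : Clock α → Bool
  | .hist _ => false
  | .proph _ => true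

/-- Comparison operators `≤, <, ≥, >` used in zone constraints. -/
inductive Cmp where
  | le | lt | ge | gt

def Cmp.sat : Cmp → ℝ → ℝ → Prop
  | .le, r, c => r ≤ c
  | .lt, r, c => r < c
  | .ge, r, c => c ≤ r
  | .gt, r, c => c < r

/-- Atomic zone constraints: `x = ⊥`, `x ∼ c`, `x₁ − x₂ ∼ c`, `x₁ + x₂ ∼ c`. -/
inductive ZAtom (α : Type) where
  | bot (x : Clock α)
  | single (x : Clock α) (op : Cmp) (c : ℤ)
  | diff (x y : Clock α) (op : Cmp) (c : ℤ)
  | sum (x y : Clock α) (op : Cmp) (c : ℤ)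

/-- Well-formedness: differences for clocks of the same type, sums for opposite types. -/
def ZAtom.WF {α : Type} : ZAtom α → Prop
  | .bot _ => True
  | .single _ _ _ => True
  | .diff x y _ _ => x.isProph = y.isProph
  | .sum x y _ _ => x.isProph ≠ y.isProph

def ZAtom.sat {α : Type} (v : Val α) : ZAtom α → Prop
  | .bot x => v x = none
  | .single x op c => ∃ r, v x = some r ∧ op.sat r (c : ℝ)
  | .diff x y op c => ∃ rx ry, v x = some rx ∧ v y = some ry ∧ op.sat (rx - ry) (c : ℝ)
  | .sum x y op c => ∃ rx ry, v x = some rx ∧ v y = some ry ∧ op.sat (rx + ry) (c : ℝ)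

/-- An event-zone: a set of (nonnegative) valuations definable by a finite
conjunction of well-formed atomic zone constraints. -/
def IsEventZone {α : Type} (Z : Set (Val α)) : Prop :=
  ∃ l : List (ZAtom α), (∀ a ∈ l, a.WF) ∧ Z = { v | Nonneg v ∧ ∀ a ∈ l, a.sat v }

/-- Closure by regions: the union of all regions meeting `Z`. -/
def ClosureR {α : Type} (cmax : ℕ) (Z : Set (Val α)) : Set (Val α) :=
  { v' | Nonneg v' ∧ ∃ v ∈ Z, RegEq cmax v v' }

/-- Future (time elapse) of a set of valuations. -/
def FutureS {α : Type} (Z : Set (Val α)) : Set (Val α) :=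
  { w | ∃ v ∈ Z, ∃ t, CanElapse v t ∧ w = elapse v t }

/-! The point `Z = {(0, 2)}` (history value `0`, prophecy value `2`) lies in the region where the
prophecy clock exceeds `cmax = 1`, which also contains `(0, 11/10)`; letting `1` time unit elapse
from there reaches `(1, 1/10)`. The future of `Z` is the segment `{(t, 2 - t)}`, which meets the
region of history value exactly `1` only at `(1, 1)`, which is not region-equivalent to
`(1, 1/10)`: the prophecy values `1` and `1/10` have different integer parts. -/

section UniformVal

variable {α : Type}

def uniformVal (h p : ℝ) : Val α := fun
  | .hist _ => some h
  | .proph _ => some p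

@[simp]
theorem uniformVal_hist (h p : ℝ) (a : α) : (uniformVal h p : Val α) (.hist a) = some h := rfl

@[simp]
theorem uniformVal_proph (h p : ℝ) (a : α) : (uniformVal h p : Val α) (.proph a) = some p := rfl

theorem nonneg_uniformVal {h p : ℝ} (hh : 0 ≤ h) (hp : 0 ≤ p) :
    Nonneg (uniformVal h p : Val α) := by
  rintro (a | a) r hr <;> simp only [uniformVal_hist, uniformVal_proph, Option.some.injEq] at hr
    <;> rwa [← hr]

theorem elapse_uniformVal (h p t : ℝ) :
    elapse (uniformVal h p : Val α) t = uniformVal (h + t) (p - t) := by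
  funext c
  cases c <;> rfl

theorem canElapse_uniformVal {h p t : ℝ} (ht : 0 ≤ t) (htp : t ≤ p) :
    CanElapse (uniformVal h p : Val α) t :=
  ⟨ht, fun _ _ hr => Option.some.inj hr ▸ htp⟩

theorem regEq_uniformVal_of_lt {cmax : ℕ} {h p p' : ℝ} (hp : (cmax : ℝ) < p)
    (hp' : (cmax : ℝ) < p') : RegEq cmax (uniformVal h p : Val α) (uniformVal h p') := by
  refine ⟨fun x => by cases x <;> simp, ?_, ?_⟩
  · rintro (a | a) r₁ r₂ h₁ h₂
      <;> simp only [uniformVal_hist, uniformVal_proph, Option.some.injEq] at h₁ h₂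
      <;> subst h₁ h₂
    · exact Or.inr ⟨rfl, rfl⟩
    · exact Or.inl ⟨hp, hp'⟩
  · rintro (a | a) (b | b) rx₁ ry₁ rx₂ ry₂ hx₁ hy₁ hx₂ hy₂ hrx hry
      <;> simp only [uniformVal_hist, uniformVal_proph, Option.some.injEq] at hx₁ hy₁ hx₂ hy₂
      <;> subst hx₁ hy₁ hx₂ hy₂
    · rfl
    all_goals linarith

end UniformVal

theorem RegEq.ceil_eq_and_floor_eq_of_le {α : Type} {cmax : ℕ} {v₁ v₂ : Val α} {x : Clock α}
    {r₁ r₂ : ℝ} (hE : RegEq cmax v₁ v₂) (h₁ : v₁ x = some r₁) (h₂ : v₂ x = some r₂)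
    (hr : r₂ ≤ cmax) : ⌈r₁⌉ = ⌈r₂⌉ ∧ ⌊r₁⌋ = ⌊r₂⌋ :=
  (hE.2.1 x r₁ r₂ h₁ h₂).resolve_left fun h => hr.not_gt h.2

theorem ZAtom.eq_some_of_sat_le_of_sat_ge {α : Type} {v : Val α} {x : Clock α} {c : ℤ}
    (hle : (ZAtom.single x .le c).sat v) (hge : (ZAtom.single x .ge c).sat v) : v x = some c := by
  obtain ⟨r, hr, hrc⟩ := hle
  obtain ⟨r', hr', hcr'⟩ := hge
  obtain rfl : r = r' := Option.some.inj (hr.symm.trans hr')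
  exact hr.trans (congrArg some (le_antisymm hrc hcr'))

def pointAtoms (h p : ℤ) : List (ZAtom Unit) :=
  [.single (.hist ()) .le h, .single (.hist ()) .ge h,
   .single (.proph ()) .le p, .single (.proph ()) .ge p]

def pointZone (h p : ℤ) : Set (Val Unit) := { v | Nonneg v ∧ ∀ a ∈ pointAtoms h p, a.sat v }

theorem isEventZone_pointZone (h p : ℤ) : IsEventZone (pointZone h p) :=
  ⟨pointAtoms h p, by simp [pointAtoms, ZAtom.WF], rfl⟩

theorem uniformVal_mem_pointZone {h p : ℤ} (hh : 0 ≤ h) (hp : 0 ≤ p) :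
    uniformVal h p ∈ pointZone h p :=
  ⟨nonneg_uniformVal (by exact_mod_cast hh) (by exact_mod_cast hp),
    by simp [pointAtoms, ZAtom.sat, Cmp.sat]⟩

theorem eq_uniformVal_of_mem_pointZone {h p : ℤ} {v : Val Unit} (hv : v ∈ pointZone h p) :
    v = uniformVal h p := by
  have hsat : ∀ a ∈ pointAtoms h p, a.sat v := hv.2
  funext c
  rcases c with ⟨⟩ | ⟨⟩ <;>
    exact ZAtom.eq_some_of_sat_le_of_sat_ge (hsat _ (by simp [pointAtoms]))
      (hsat _ (by simp [pointAtoms]))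

theorem eq_uniformVal_of_mem_futureS_pointZone {h p : ℤ} {u : Val Unit}
    (hu : u ∈ FutureS (pointZone h p)) : ∃ t : ℝ, u = uniformVal (h + t) (p - t) := by
  obtain ⟨v, hv, t, -, rfl⟩ := hu
  exact ⟨t, by rw [eq_uniformVal_of_mem_pointZone hv, elapse_uniformVal]⟩

/-- Closure by regions does not commute with time elapse for event clocks: over a
one-letter alphabet with `cmax = 1` there is an event-zone `Z` with
`Future(Closure(Z)) ⊄ Closure(Future(Z))`. -/
theorem closure_does_not_commute_with_future :
    ∃ Z : Set (Val Unit), IsEventZone Z ∧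
      ¬ FutureS (ClosureR 1 Z) ⊆ ClosureR 1 (FutureS Z) := by
  refine ⟨pointZone 0 2, isEventZone_pointZone 0 2, fun hsub => ?_⟩
  have hv : uniformVal ((0 : ℤ) : ℝ) (11 / 10) ∈ ClosureR 1 (pointZone 0 2) :=
    ⟨nonneg_uniformVal (by norm_num) (by norm_num), _,
      uniformVal_mem_pointZone le_rfl (by norm_num),
      regEq_uniformVal_of_lt (by norm_num) (by norm_num)⟩
  have hw : uniformVal 1 (1 / 10) ∈ FutureS (ClosureR 1 (pointZone 0 2)) :=
    ⟨_, hv, 1, canElapse_uniformVal zero_le_one (by norm_num), by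
      rw [elapse_uniformVal]; norm_num⟩
  obtain ⟨-, u, hu, hE⟩ := hsub hw
  obtain ⟨t, rfl⟩ := eq_uniformVal_of_mem_futureS_pointZone hu
  have ht : t = 1 := by
    obtain ⟨hceil, hfloor⟩ :=
      hE.ceil_eq_and_floor_eq_of_le (x := .hist ()) rfl rfl (by norm_num)
    norm_num at hceil hfloor
    exact le_antisymm (by exact_mod_cast Int.ceil_le.1 hceil.le)
      (by exact_mod_cast Int.le_floor.1 hfloor.ge)
  have hfloor := (hE.ceil_eq_and_floor_eq_of_le (x := .proph ()) rfl rfl (by norm_num)).2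
  norm_num [ht] at hfloor
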